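/- Let K, K', r be positive integers with r ≤ K and r ≤ K', and for a matrix H ∈ F₂^{K'×K} of rank r let V(H) denote the set of pairs (T, S) with T ⊆ {1,…,K'}, S ⊆ {1,…,K}, |T| = |S| = r, such that the r×r submatrix of H with rows T and columns S (taken in increasing order) has rank r. Let N_{a,b}(i) denote the number of a×b matrices over F₂ of rank i. Then for every invertible matrix G ∈ F₂^{r×r}, ∑_{(T,S)} ∑_H 1/|V(H)| = N_{K',K}(r) / N_{r,r}(r), where the outer sum is over all pairs (T, S) with T ⊆ {1,…,K'}, S ⊆ {1,…,K}, |T| = |S| = r, and the inner sum is over all H ∈ F₂^{K'×K} with rank(H) = r whose submatrix with rows T and columns S equals G. -/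

import Mathlib

/-- The set `V(H)` of the paper: pairs of a row-index set `T` and a column-index set
`S`, each of size `r`, such that the `r × r` submatrix of `H` on rows `T` and
columns `S` (taken in increasing order) has rank `r`. -/
def fullRankPairs (K K' r : ℕ) (H : Matrix (Fin K') (Fin K) (ZMod 2)) :
    Set (Finset (Fin K') × Finset (Fin K)) :=
  {TS | ∃ (hT : TS.1.card = r) (hS : TS.2.card = r),
    (H.submatrix (TS.1.orderEmbOfFin hT) (TS.2.orderEmbOfFin hS)).rank = r}

/-- `N a b i` is the number of `a × b` matrices over `F₂` of rank `i`. -/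
noncomputable def rankCount (a b i : ℕ) : ℕ :=
  {H : Matrix (Fin a) (Fin b) (ZMod 2) | H.rank = i}.ncard

/-!
If `H` has rank `r` and an invertible `r × r` minor `G = H[T, S]`, then `H = C G⁻¹ R`, where `C`
and `R` are the columns `S` and the rows `T` of `H`. Replacing the middle factor `G⁻¹` by
`G⁻¹ G' G⁻¹` moves the minor at `(T, S)` from `G` to `G'`, and this is a bijection between the
rank-`r` matrices with minor `G` and those with minor `G'` at `(T, S)`. It preserves `V(H)`: every
minor `H[T', S'] = H[T', S] G⁻¹ H[T, S']` is invertible iff `H[T', S]` and `H[T, S']` are. Hence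
the double sum `X` of the theorem does not depend on `G`, and summing it over all invertible `G`
counts every rank-`r` matrix `H` once (with weight `|V(H)| / |V(H)|`, and `V(H) ≠ ∅`), so that
`N_{r,r}(r) · X = N_{K',K}(r)`.
-/

open Finset

namespace Matrix

variable {𝕜 : Type*} [Field 𝕜] {m n o : Type*} [Fintype o]

theorem isUnit_iff_rank_eq_card [DecidableEq o] {A : Matrix o o 𝕜} :
    IsUnit A ↔ A.rank = Fintype.card o := by
  refine ⟨A.rank_of_isUnit, fun h => ?_⟩
  rw [← mulVec_surjective_iff_isUnit]
  refine LinearMap.range_eq_top.1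
    (Submodule.eq_top_of_finrank_eq (S := LinearMap.range A.mulVecLin) ?_)
  rwa [Module.finrank_fintype_fun_eq_card]

theorem isUnit_mul_mul_iff {R : Type*} [CommRing R] [DecidableEq o] {M : Matrix o o R}
    (hM : IsUnit M) (A B : Matrix o o R) : IsUnit (A * M * B) ↔ IsUnit A ∧ IsUnit B := by
  simp only [isUnit_iff_isUnit_det, IsUnit.mul_iff, hM, and_true]

theorem exists_rank_submatrix_orderEmbOfFin_id [Fintype m] [Fintype n] [LinearOrder m]
    {A : Matrix m n 𝕜} {k : ℕ} (hA : A.rank = k) :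
    ∃ (T : Finset m) (hT : T.card = k), (A.submatrix (T.orderEmbOfFin hT) id).rank = k := by
  classical
  -- `b` indexes a basis of the row space made of rows of `A`
  obtain ⟨b, -, -, hspan, hli⟩ := exists_linearIndepOn_extension
    (linearIndepOn_empty 𝕜 A.row) (Set.empty_subset Set.univ)
  set T := b.toFinset
  have hmem {k : ℕ} (hT : T.card = k) (i : Fin k) : T.orderEmbOfFin hT i ∈ b :=
    Set.mem_toFinset.1 (T.orderEmbOfFin_mem hT i)
  have hcard {k : ℕ} (hT : T.card = k) : (A.submatrix (T.orderEmbOfFin hT) id).rank = k := by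
    have hinj : Function.Injective fun i : Fin k => (⟨T.orderEmbOfFin hT i, hmem hT i⟩ : b) :=
      fun i j hij => by simpa using hij
    have hli' : LinearIndependent 𝕜 (A.submatrix (T.orderEmbOfFin hT) id).row := by
      have := hli.comp _ hinj
      exact this
    rw [hli'.rank_matrix, Fintype.card_fin]
  have hrank {k : ℕ} (hT : T.card = k) :
      (A.submatrix (T.orderEmbOfFin hT) id).rank = A.rank := by
    have hrows : Set.range (A.submatrix (T.orderEmbOfFin hT) id).row = A.row '' b := by
      rw [show (A.submatrix (T.orderEmbOfFin hT) id).row = A.row ∘ T.orderEmbOfFin hT from rfl,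
        Set.range_comp, range_orderEmbOfFin, Set.coe_toFinset]
    rw [rank_eq_finrank_span_row, rank_eq_finrank_span_row, hrows,
      le_antisymm (Submodule.span_mono (Set.image_subset_range _ _))
        (Submodule.span_le.2 (by simpa using hspan))]
  -- `hcard` and `hrank` are stated for arbitrary `k` so that at `rfl` they give `T.card = A.rank`
  exact ⟨T, ((hcard rfl).symm.trans (hrank rfl)).trans hA, (hrank _).trans hA⟩

theorem exists_rank_submatrix_orderEmbOfFin [Fintype m] [Fintype n] [LinearOrder m]
    [LinearOrder n] {A : Matrix m n 𝕜} {k : ℕ} (hA : A.rank = k) :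
    ∃ (T : Finset m) (S : Finset n) (hT : T.card = k) (hS : S.card = k),
      (A.submatrix (T.orderEmbOfFin hT) (S.orderEmbOfFin hS)).rank = k := by
  obtain ⟨T, hT, hTA⟩ := exists_rank_submatrix_orderEmbOfFin_id hA
  obtain ⟨S, hS, hSA⟩ := exists_rank_submatrix_orderEmbOfFin_id
    ((rank_transpose _).trans hTA : (A.submatrix (T.orderEmbOfFin hT) id)ᵀ.rank = k)
  refine ⟨T, S, hT, hS, ?_⟩
  rwa [← rank_transpose, transpose_submatrix, transpose_transpose, submatrix_submatrix] at hSA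

variable [DecidableEq o]

theorem eq_submatrix_mul_inv_mul_submatrix [Fintype n] {H : Matrix m n 𝕜} {f : o → m}
    {g : o → n} (hrank : H.rank ≤ Fintype.card o) (hG : IsUnit (H.submatrix f g)) :
    H = H.submatrix id g * (H.submatrix f g)⁻¹ * H.submatrix f id := by
  set C := H.submatrix id g
  set G := H.submatrix f g
  have hcols : LinearMap.range C.mulVecLin ≤ LinearMap.range H.mulVecLin := by
    rw [range_mulVecLin, range_mulVecLin]
    exact Submodule.span_mono (Set.range_comp_subset_range g H.col)
  -- the columns `g` of `H` already span its column space
  have hrange : LinearMap.range C.mulVecLin = LinearMap.range H.mulVecLin := by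
    refine Submodule.eq_of_le_of_finrank_le hcols (hrank.trans ?_)
    calc Fintype.card o = G.rank := (G.rank_of_isUnit hG).symm
      _ ≤ C.rank := C.rank_submatrix_le f id
  refine ext_iff_mulVec.2 fun v => ?_
  obtain ⟨x, hx⟩ : H *ᵥ v ∈ LinearMap.range C.mulVecLin := hrange ▸ ⟨v, rfl⟩
  have hGx : G *ᵥ x = H.submatrix f id *ᵥ v := funext fun i => congrFun hx (f i)
  have hx' : G⁻¹ *ᵥ (G *ᵥ x) = x := by
    rw [mulVec_mulVec, nonsing_inv_mul _ ((isUnit_iff_isUnit_det _).1 hG), one_mulVec]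
  rw [← mulVec_mulVec, ← mulVec_mulVec, ← hGx, hx']
  exact hx.symm

/-- Writing `H = C G⁻¹ R` with `G = H[f, g]` (see `eq_submatrix_mul_inv_mul_submatrix`), this is
`C G⁻¹ G' G⁻¹ R`: its minor at `(f, g)` is `G'`, and it has the same invertible minors as `H`. -/
noncomputable def replaceMinor (H : Matrix m n 𝕜) (f : o → m) (g : o → n) (G' : Matrix o o 𝕜) :
    Matrix m n 𝕜 :=
  H.submatrix id g * (H.submatrix f g)⁻¹ * G' * (H.submatrix f g)⁻¹ * H.submatrix f id

variable {f : o → m} {g : o → n} {G' : Matrix o o 𝕜} {H : Matrix m n 𝕜}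

theorem submatrix_replaceMinor {p q : Type*} (f' : p → m) (g' : q → n) :
    (H.replaceMinor f g G').submatrix f' g' =
      H.submatrix f' g * (H.submatrix f g)⁻¹ * G' * (H.submatrix f g)⁻¹ * H.submatrix f g' := by
  simp only [replaceMinor, submatrix_mul (e₂ := id) (he₂ := Function.bijective_id),
    submatrix_submatrix, submatrix_id_id, Function.comp_id, Function.id_comp]

theorem replaceMinor_submatrix (hG : IsUnit (H.submatrix f g)) :
    (H.replaceMinor f g G').submatrix f g = G' := by
  have hdet := (isUnit_iff_isUnit_det _).1 hG
  simp only [submatrix_replaceMinor, Matrix.mul_assoc, mul_nonsing_inv_cancel_left _ _ hdet,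
    nonsing_inv_mul _ hdet, Matrix.mul_one]

variable [Fintype n]

theorem rank_replaceMinor (hG : IsUnit (H.submatrix f g)) (hG' : IsUnit G') :
    (H.replaceMinor f g G').rank = Fintype.card o := by
  refine ((rank_mul_le_right _ _).trans (rank_le_card_height _)).antisymm ?_
  calc Fintype.card o = G'.rank := (G'.rank_of_isUnit hG').symm
    _ = ((H.replaceMinor f g G').submatrix f g).rank := by rw [replaceMinor_submatrix hG]
    _ ≤ _ := rank_submatrix_le _ _ _

theorem isUnit_submatrix_replaceMinor_iff (hrank : H.rank ≤ Fintype.card o)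
    (hG : IsUnit (H.submatrix f g)) (hG' : IsUnit G') (f' : o → m) (g' : o → n) :
    IsUnit ((H.replaceMinor f g G').submatrix f' g') ↔ IsUnit (H.submatrix f' g') := by
  have hinv := isUnit_nonsing_inv_iff.2 hG
  conv_rhs => rw [eq_submatrix_mul_inv_mul_submatrix hrank hG]
  simp only [submatrix_replaceMinor, submatrix_mul (e₂ := id) (he₂ := Function.bijective_id),
    submatrix_submatrix, submatrix_id_id, Function.comp_id, Function.id_comp]
  rw [show H.submatrix f' g * (H.submatrix f g)⁻¹ * G' * (H.submatrix f g)⁻¹ * H.submatrix f g' =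
      H.submatrix f' g * ((H.submatrix f g)⁻¹ * G' * (H.submatrix f g)⁻¹) * H.submatrix f g' by
    simp only [Matrix.mul_assoc],
    isUnit_mul_mul_iff ((hinv.mul hG').mul hinv), isUnit_mul_mul_iff hinv]

theorem replaceMinor_replaceMinor (hrank : H.rank ≤ Fintype.card o)
    (hG : IsUnit (H.submatrix f g)) (hG' : IsUnit G') :
    (H.replaceMinor f g G').replaceMinor f g (H.submatrix f g) = H := by
  have hdet := (isUnit_iff_isUnit_det _).1 hG
  have hdet' := (isUnit_iff_isUnit_det _).1 hG'
  conv_rhs => rw [eq_submatrix_mul_inv_mul_submatrix hrank hG]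
  rw [replaceMinor, replaceMinor_submatrix hG, submatrix_replaceMinor, submatrix_replaceMinor]
  simp only [Matrix.mul_assoc, mul_nonsing_inv_cancel_left _ _ hdet,
    nonsing_inv_mul_cancel_left _ _ hdet, mul_nonsing_inv_cancel_left _ _ hdet',
    nonsing_inv_mul_cancel_left _ _ hdet']

end Matrix

open Classical in
theorem Finset.sum_sum_filter_mem_one_div_ncard {R α β : Type*} [Field R] [CharZero R]
    (s : Finset α) (A : Finset β) (V : β → Set α) (hVs : ∀ b ∈ A, V b ⊆ s)
    (hV : ∀ b ∈ A, (V b).Nonempty) :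
    ∑ a ∈ s, ∑ b ∈ A with a ∈ V b, (1 : R) / (V b).ncard = A.card := by
  rw [sum_comm' (t' := A) (s' := fun b => s.filter (· ∈ V b)) (by
    intro a b; simp only [mem_filter]; tauto), card_eq_sum_ones, Nat.cast_sum]
  refine sum_congr rfl fun b hb => ?_
  have hfilter : (↑(s.filter (· ∈ V b)) : Set α) = V b := by
    ext a
    simpa using fun ha => hVs b hb ha
  have hne : ((V b).ncard : R) ≠ 0 :=
    Nat.cast_ne_zero.2 ((Set.ncard_pos (s.finite_toSet.subset (hVs b hb))).2 (hV b hb)).ne'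
  rw [sum_const, nsmul_eq_mul, ← Set.ncard_coe_finset, hfilter, mul_one_div_cancel hne,
    Nat.cast_one]

section fullRankPairs

variable {K K' r : ℕ}

theorem mem_fullRankPairs_iff {H : Matrix (Fin K') (Fin K) (ZMod 2)}
    {TS : Finset (Fin K') × Finset (Fin K)} :
    TS ∈ fullRankPairs K K' r H ↔ ∃ (hT : TS.1.card = r) (hS : TS.2.card = r),
      IsUnit (H.submatrix (TS.1.orderEmbOfFin hT) (TS.2.orderEmbOfFin hS)) := by
  simp only [fullRankPairs, Set.mem_ofPred_eq, Matrix.isUnit_iff_rank_eq_card, Fintype.card_fin]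

theorem fullRankPairs_nonempty {H : Matrix (Fin K') (Fin K) (ZMod 2)} (hH : H.rank = r) :
    (fullRankPairs K K' r H).Nonempty := by
  obtain ⟨T, S, hT, hS, hTS⟩ := Matrix.exists_rank_submatrix_orderEmbOfFin hH
  exact ⟨(T, S), hT, hS, hTS⟩

theorem fullRankPairs_replaceMinor {H : Matrix (Fin K') (Fin K) (ZMod 2)} (hH : H.rank = r)
    {T : Finset (Fin K')} {S : Finset (Fin K)} (hT : T.card = r) (hS : S.card = r)
    {G' : Matrix (Fin r) (Fin r) (ZMod 2)}
    (hG : IsUnit (H.submatrix (T.orderEmbOfFin hT) (S.orderEmbOfFin hS))) (hG' : IsUnit G') :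
    fullRankPairs K K' r (H.replaceMinor (T.orderEmbOfFin hT) (S.orderEmbOfFin hS) G') =
      fullRankPairs K K' r H := by
  ext TS
  simp only [mem_fullRankPairs_iff, Matrix.isUnit_submatrix_replaceMinor_iff
    (hH.trans (Fintype.card_fin r).symm).le hG hG']

open Classical in
theorem sum_submatrix_eq_of_isUnit {M : Type*} [AddCommMonoid M]
    (w : Set (Finset (Fin K') × Finset (Fin K)) → M) {T : Finset (Fin K')} {S : Finset (Fin K)}
    (hT : T.card = r) (hS : S.card = r) {G G' : Matrix (Fin r) (Fin r) (ZMod 2)}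
    (hG : IsUnit G) (hG' : IsUnit G') :
    ∑ H with H.rank = r ∧ ∃ (hT : T.card = r) (hS : S.card = r),
          H.submatrix (T.orderEmbOfFin hT) (S.orderEmbOfFin hS) = G,
        w (fullRankPairs K K' r H) =
      ∑ H with H.rank = r ∧ ∃ (hT : T.card = r) (hS : S.card = r),
          H.submatrix (T.orderEmbOfFin hT) (S.orderEmbOfFin hS) = G',
        w (fullRankPairs K K' r H) := by
  simp only [exists_prop_of_true hT, exists_prop_of_true hS]
  set f := T.orderEmbOfFin hT
  set g := S.orderEmbOfFin hS
  have hmaps {G₁ G₂ : Matrix (Fin r) (Fin r) (ZMod 2)} (hG₁ : IsUnit G₁) (hG₂ : IsUnit G₂)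
      (H : Matrix (Fin K') (Fin K) (ZMod 2)) (hH : H.rank = r ∧ H.submatrix f g = G₁) :
      ((H.replaceMinor f g G₂).rank = r ∧ (H.replaceMinor f g G₂).submatrix f g = G₂) ∧
        (H.replaceMinor f g G₂).replaceMinor f g G₁ = H := by
    obtain ⟨hH, rfl⟩ := hH
    have hle : H.rank ≤ Fintype.card (Fin r) := (hH.trans (Fintype.card_fin r).symm).le
    refine ⟨⟨?_, Matrix.replaceMinor_submatrix hG₁⟩, Matrix.replaceMinor_replaceMinor hle hG₁ hG₂⟩
    rw [Matrix.rank_replaceMinor hG₁ hG₂, Fintype.card_fin]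
  refine sum_nbij' (fun H => H.replaceMinor f g G') (fun H => H.replaceMinor f g G)
    ?_ ?_ ?_ ?_ ?_ <;> simp only [mem_filter, mem_univ, true_and]
  · exact fun H hH => (hmaps hG hG' H hH).1
  · exact fun H hH => (hmaps hG' hG H hH).1
  · exact fun H hH => (hmaps hG hG' H hH).2
  · exact fun H hH => (hmaps hG' hG H hH).2
  · rintro H ⟨hH, rfl⟩
    rw [fullRankPairs_replaceMinor hH hT hS hG hG']

open Classical in
theorem sum_isUnit_sum_submatrix_eq {M : Type*} [AddCommMonoid M]
    (φ : Matrix (Fin K') (Fin K) (ZMod 2) → M) {T : Finset (Fin K')} {S : Finset (Fin K)}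
    (hT : T.card = r) (hS : S.card = r) :
    ∑ G : Matrix (Fin r) (Fin r) (ZMod 2) with IsUnit G,
      ∑ H with H.rank = r ∧ ∃ (hT : T.card = r) (hS : S.card = r),
          H.submatrix (T.orderEmbOfFin hT) (S.orderEmbOfFin hS) = G, φ H =
    ∑ H ∈ {H : Matrix (Fin K') (Fin K) (ZMod 2) | H.rank = r} with
      (T, S) ∈ fullRankPairs K K' r H, φ H := by
  rw [← sum_fiberwise_of_maps_to (t := {G | IsUnit G})
    (g := fun H : Matrix (Fin K') (Fin K) (ZMod 2) =>
      H.submatrix (T.orderEmbOfFin hT) (S.orderEmbOfFin hS)) ?maps]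
  case maps =>
    intro H hH
    simp only [mem_filter, mem_univ, true_and, mem_fullRankPairs_iff] at hH ⊢
    exact hH.2.choose_spec.choose_spec
  refine sum_congr rfl fun G hG => sum_congr ?_ fun _ _ => rfl
  ext H
  simp only [mem_filter, mem_univ, true_and, mem_fullRankPairs_iff, exists_prop_of_true hT,
    exists_prop_of_true hS] at hG ⊢
  exact ⟨fun ⟨hH, hHG⟩ => ⟨⟨hH, hHG ▸ hG⟩, hHG⟩, fun ⟨⟨hH, _⟩, hHG⟩ => ⟨hH, hHG⟩⟩

end fullRankPairs

open Classical in
theorem rankCount_eq_card (a b i : ℕ) :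
    rankCount a b i = #{H : Matrix (Fin a) (Fin b) (ZMod 2) | H.rank = i} := by
  rw [rankCount, ← Set.ncard_coe_finset, coe_filter]
  simp

open Classical in
theorem rankCount_self_eq_card_isUnit (r : ℕ) :
    rankCount r r r = #{G : Matrix (Fin r) (Fin r) (ZMod 2) | IsUnit G} := by
  simp only [rankCount_eq_card, Matrix.isUnit_iff_rank_eq_card, Fintype.card_fin]

open Finset Classical in
theorem sum_sum_inv_ncard_fullRankPairs_general (K K' r : ℕ)
    (G : Matrix (Fin r) (Fin r) (ZMod 2)) (hG : IsUnit G) :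
    ∑ TS ∈ univ.filter (fun TS : Finset (Fin K') × Finset (Fin K) =>
        TS.1.card = r ∧ TS.2.card = r),
      ∑ H ∈ univ.filter (fun H : Matrix (Fin K') (Fin K) (ZMod 2) =>
          H.rank = r ∧ ∃ (hT : TS.1.card = r) (hS : TS.2.card = r),
            H.submatrix (TS.1.orderEmbOfFin hT) (TS.2.orderEmbOfFin hS) = G),
        (1 : ℝ) / (fullRankPairs K K' r H).ncard
    = (rankCount K' K r : ℝ) / (rankCount r r r : ℝ) := by
  set X : Matrix (Fin r) (Fin r) (ZMod 2) → ℝ := fun G' =>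
    ∑ TS ∈ univ.filter (fun TS : Finset (Fin K') × Finset (Fin K) =>
        TS.1.card = r ∧ TS.2.card = r),
      ∑ H ∈ univ.filter (fun H : Matrix (Fin K') (Fin K) (ZMod 2) =>
          H.rank = r ∧ ∃ (hT : TS.1.card = r) (hS : TS.2.card = r),
            H.submatrix (TS.1.orderEmbOfFin hT) (TS.2.orderEmbOfFin hS) = G'),
        (1 : ℝ) / (fullRankPairs K K' r H).ncard
  have hX : ∀ G' ∈ ({G | IsUnit G} : Finset _), X G' = X G := fun G' hG' =>
    sum_congr rfl fun TS hTS => sum_submatrix_eq_of_isUnit (fun V => (1 : ℝ) / V.ncard)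
      (mem_filter.1 hTS).2.1 (mem_filter.1 hTS).2.2 (mem_filter.1 hG').2 hG
  have htotal : ∑ G' with IsUnit G', X G' = rankCount K' K r := by
    rw [sum_comm, sum_congr rfl fun TS hTS =>
        sum_isUnit_sum_submatrix_eq _ (mem_filter.1 hTS).2.1 (mem_filter.1 hTS).2.2,
      sum_sum_filter_mem_one_div_ncard, rankCount_eq_card]
    · intro H _ TS hTS
      obtain ⟨hT, hS, -⟩ := mem_fullRankPairs_iff.1 hTS
      simp [hT, hS]
    · exact fun H hH => fullRankPairs_nonempty (mem_filter.1 hH).2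
  rw [sum_congr rfl hX, sum_const, nsmul_eq_mul, ← rankCount_self_eq_card_isUnit] at htotal
  have hunits : (rankCount r r r : ℝ) ≠ 0 := by
    rw [rankCount_self_eq_card_isUnit]
    exact Nat.cast_ne_zero.2 (card_pos.2 ⟨1, by simp⟩).ne'
  rw [← htotal, mul_div_cancel_left₀ _ hunits]

open Finset Classical in
/-- The combinatorial content of Lemma 5 of the paper: for an invertible `r × r`
matrix `G` over `F₂`, summing `1/|V(H)|` over all locations `(T, S)` and all
rank-`r` matrices `H` containing `G` at that location gives
`N_{K',K}(r) / N_{r,r}(r)`. -/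
theorem sum_sum_inv_ncard_fullRankPairs (K K' r : ℕ)
    (hK : 0 < K) (hK' : 0 < K') (hr : 0 < r) (hrK : r ≤ K) (hrK' : r ≤ K')
    (G : Matrix (Fin r) (Fin r) (ZMod 2)) (hG : IsUnit G) :
    ∑ TS ∈ univ.filter (fun TS : Finset (Fin K') × Finset (Fin K) =>
        TS.1.card = r ∧ TS.2.card = r),
      ∑ H ∈ univ.filter (fun H : Matrix (Fin K') (Fin K) (ZMod 2) =>
          H.rank = r ∧ ∃ (hT : TS.1.card = r) (hS : TS.2.card = r),
            H.submatrix (TS.1.orderEmbOfFin hT) (TS.2.orderEmbOfFin hS) = G),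
        (1 : ℝ) / (fullRankPairs K K' r H).ncard
    = (rankCount K' K r : ℝ) / (rankCount r r r : ℝ) :=
  sum_sum_inv_ncard_fullRankPairs_general K K' r G hG
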